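/- Let M ∈ ℝ^{3×3} have singular value decomposition M = U Σ Vᵀ with det(U Vᵀ) = 1. Then R = U Vᵀ minimizes the Frobenius norm ‖R - M‖_F over all rotation matrices R ∈ SO(3). -/

import Mathlib

/-!
Expanding the square, `‖R - M‖_F² = 3 - 2 tr (Rᵀ M) + ‖M‖_F²` for every orthogonal `R`, so it
suffices to maximise `tr (Rᵀ M)`. With `M = U Σ Vᵀ` this equals `tr (Q Σ) = ∑ Qᵢᵢ σᵢ` for the
orthogonal matrix `Q = Vᵀ Rᵀ U`, whose entries are bounded by `1`; hence `tr (Rᵀ M) ≤ ∑ σᵢ`,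
with equality at `R = U Vᵀ`, where `Q = 1`.
-/

open Matrix

namespace Matrix

variable {m n : Type*} [Fintype m] [Fintype n]

theorem sum_sum_mul_eq_trace_transpose_mul {α : Type*} [NonUnitalNonAssocSemiring α]
    (A B : Matrix m n α) :
    ∑ i, ∑ j, A i j * B i j = trace (Aᵀ * B) := by
  simp only [trace, diag, mul_apply, transpose_apply]
  exact Finset.sum_comm

theorem sum_sum_sub_sq_eq_trace {α : Type*} [CommRing α] (A B : Matrix m n α) :
    ∑ i, ∑ j, (A i j - B i j) ^ 2 = trace (Aᵀ * A) - 2 * trace (Aᵀ * B) + trace (Bᵀ * B) := by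
  simp only [← sum_sum_mul_eq_trace_transpose_mul, Finset.mul_sum, ← Finset.sum_sub_distrib,
    ← Finset.sum_add_distrib]
  refine Finset.sum_congr rfl fun i _ => Finset.sum_congr rfl fun j _ => ?_
  ring

variable [DecidableEq n] {A : Matrix n n ℝ}

theorem mem_unitaryGroup_iff_transpose_mul_self : A ∈ unitaryGroup n ℝ ↔ Aᵀ * A = 1 := by
  rw [mem_unitaryGroup_iff', star_eq_conjTranspose, conjTranspose_eq_transpose_of_trivial]

theorem transpose_mem_unitaryGroup (hA : A ∈ unitaryGroup n ℝ) : Aᵀ ∈ unitaryGroup n ℝ := by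
  rw [mem_unitaryGroup_iff_transpose_mul_self, transpose_transpose]
  rwa [mem_unitaryGroup_iff, star_eq_conjTranspose, conjTranspose_eq_transpose_of_trivial] at hA

theorem trace_transpose_mul_self_of_mem_unitaryGroup (hA : A ∈ unitaryGroup n ℝ) :
    trace (Aᵀ * A) = Fintype.card n := by
  rw [mem_unitaryGroup_iff_transpose_mul_self.mp hA, trace_one]

theorem trace_mul_diagonal_le_sum_of_mem_unitaryGroup {Q : Matrix n n ℝ}
    (hQ : Q ∈ unitaryGroup n ℝ) {σ : n → ℝ} (hσ : ∀ i, 0 ≤ σ i) :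
    trace (Q * diagonal σ) ≤ ∑ i, σ i := by
  simp only [trace, diag, mul_diagonal]
  refine Finset.sum_le_sum fun i _ => mul_le_of_le_one_left (hσ i) ?_
  exact (le_abs_self _).trans (entry_norm_bound_of_unitary hQ i i)

theorem trace_transpose_mul_svd {α : Type*} [CommSemiring α] (R U V : Matrix n n α) (σ : n → α) :
    trace (Rᵀ * (U * diagonal σ * Vᵀ)) = trace (Vᵀ * Rᵀ * U * diagonal σ) := by
  rw [← Matrix.mul_assoc, ← Matrix.mul_assoc, trace_mul_comm, ← Matrix.mul_assoc,
    ← Matrix.mul_assoc]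

end Matrix

theorem svd_projection_onto_SO3_general
    (M U V S : Matrix (Fin 3) (Fin 3) ℝ) (σ : Fin 3 → ℝ)
    (hU : Uᵀ * U = 1) (hV : Vᵀ * V = 1)
    (hS : S = Matrix.diagonal σ) (hσ : ∀ i, 0 ≤ σ i)
    (hM : M = U * S * Vᵀ) :
    ∀ R : Matrix (Fin 3) (Fin 3) ℝ, Rᵀ * R = 1 → R.det = 1 →
      ∑ i, ∑ j, ((U * Vᵀ) i j - M i j) ^ 2 ≤ ∑ i, ∑ j, (R i j - M i j) ^ 2 := by
  intro R hR _
  have hU' : U ∈ unitaryGroup (Fin 3) ℝ := mem_unitaryGroup_iff_transpose_mul_self.mpr hU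
  have hV' : V ∈ unitaryGroup (Fin 3) ℝ := mem_unitaryGroup_iff_transpose_mul_self.mpr hV
  have hR' : R ∈ unitaryGroup (Fin 3) ℝ := mem_unitaryGroup_iff_transpose_mul_self.mpr hR
  have hUV : U * Vᵀ ∈ unitaryGroup (Fin 3) ℝ := mul_mem hU' (transpose_mem_unitaryGroup hV')
  suffices trace (Rᵀ * M) ≤ trace ((U * Vᵀ)ᵀ * M) by
    rw [sum_sum_sub_sq_eq_trace, sum_sum_sub_sq_eq_trace,
      trace_transpose_mul_self_of_mem_unitaryGroup hR',
      trace_transpose_mul_self_of_mem_unitaryGroup hUV]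
    linarith
  have hQ_one : Vᵀ * (U * Vᵀ)ᵀ * U = 1 := by
    rw [transpose_mul, transpose_transpose, Matrix.mul_assoc, Matrix.mul_assoc, hU,
      Matrix.mul_one, hV]
  rw [hM, hS, trace_transpose_mul_svd, trace_transpose_mul_svd, hQ_one, Matrix.one_mul,
    trace_diagonal]
  exact trace_mul_diagonal_le_sum_of_mem_unitaryGroup
    (mul_mem (mul_mem (transpose_mem_unitaryGroup hV') (transpose_mem_unitaryGroup hR')) hU') hσ

/-- If `M = U S Vᵀ` is an SVD of `M` with `det (U Vᵀ) = 1`, then `R = U Vᵀ` minimizes the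
Frobenius norm `‖R - M‖_F` over all rotations `R ∈ SO(3)`. -/
theorem svd_projection_onto_SO3
    (M U V S : Matrix (Fin 3) (Fin 3) ℝ) (σ : Fin 3 → ℝ)
    (hU : Uᵀ * U = 1) (hV : Vᵀ * V = 1)
    (hS : S = Matrix.diagonal σ) (hσ : ∀ i, 0 ≤ σ i)
    (hM : M = U * S * Vᵀ) (hdet : (U * Vᵀ).det = 1) :
    ∀ R : Matrix (Fin 3) (Fin 3) ℝ, Rᵀ * R = 1 → R.det = 1 →
      ∑ i, ∑ j, ((U * Vᵀ) i j - M i j) ^ 2 ≤ ∑ i, ∑ j, (R i j - M i j) ^ 2 :=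
  svd_projection_onto_SO3_general M U V S σ hU hV hS hσ hM
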